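/- Let n ≥ 3 be odd. The spectrum of the graph K_1 ∨ (n·K_1 ⊔ K_{n-1}) on 2n vertices consists of the eigenvalue 0 with multiplicity n-1, the eigenvalue -1 with multiplicity n-2, together with the three roots of x³ - (n-2)x² - (2n-1)x + n(n-2) = 0. -/

import Mathlib

open Matrix Polynomial

/-- Adjacency matrix (over `ℂ`) of the graph `K_1 ∨ (n·K_1 ⊔ K_{n-1})` on `2n` vertices:
vertex `0` is the cone vertex, vertices `1, …, n-1` form `K_{n-1}`, and vertices
`n, …, 2n-1` are `n` isolated vertices. -/
def adjJoinOddC (n : ℕ) : Matrix (Fin (2 * n)) (Fin (2 * n)) ℂ :=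
  Matrix.of fun i j =>
    if i ≠ j ∧ (i.val = 0 ∨ j.val = 0 ∨ (i.val < n ∧ j.val < n)) then 1 else 0

namespace SpecAux

def aEnt (n i j : ℕ) : ℂ := if i ≠ j ∧ (i = 0 ∨ j = 0 ∨ (i < n ∧ j < n)) then 1 else 0

def pEnt (n i j : ℕ) : ℂ :=
  if j = 0 then (if i = 0 then 1 else 0)
  else if j = 1 then (if 1 ≤ i ∧ i < n then 1 else 0)
  else if j = 2 then (if n ≤ i then 1 else 0)
  else if j ≤ n then (if i = 1 then 1 else if i = j - 1 then -1 else 0)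
  else (if i = n then 1 else if i = j then -1 else 0)

def bEnt (n i j : ℕ) : ℂ :=
  if j = 0 then (if i = 1 ∨ i = 2 then 1 else 0)
  else if j = 1 then (if i = 0 then (n:ℂ)-1 else if i = 1 then (n:ℂ)-2 else 0)
  else if j = 2 then (if i = 0 then (n:ℂ) else 0)
  else if j ≤ n then (if i = j then -1 else 0)
  else 0

lemma sum_ite_eq_nat {m a : ℕ} (ha : a < m) (f : ℕ → ℂ) :
    ∑ k ∈ Finset.range m, (if k = a then f k else 0) = f a := by
  rw [Finset.sum_ite_eq' (Finset.range m) a f, if_pos (Finset.mem_range.2 ha)]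

lemma key0 (n : ℕ) (hn : 3 ≤ n) (iv : ℕ) (hi : iv < 2*n) :
    ∑ k ∈ Finset.range (2*n), aEnt n iv k * pEnt n k 0
      = ∑ k ∈ Finset.range (2*n), pEnt n iv k * bEnt n k 0 := by
  have hL : ∀ k ∈ Finset.range (2*n), aEnt n iv k * pEnt n k 0
      = if k = 0 then aEnt n iv k else 0 := by
    intro k _; simp [pEnt]
  have hR : ∀ k ∈ Finset.range (2*n), pEnt n iv k * bEnt n k 0
      = (if k = 1 then pEnt n iv k else 0) + (if k = 2 then pEnt n iv k else 0) := by
    intro k _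
    simp only [bEnt, if_pos rfl]
    split_ifs with h h1 h2 <;> simp_all <;> ring
  rw [Finset.sum_congr rfl hL, Finset.sum_congr rfl hR, Finset.sum_add_distrib,
    sum_ite_eq_nat (by omega), sum_ite_eq_nat (by omega), sum_ite_eq_nat (by omega)]
  simp only [aEnt, pEnt]
  split_ifs <;> simp_all <;> omega

lemma sum_ind_Ico (m a b : ℕ) (c : ℂ) :
    ∑ k ∈ Finset.range m, (if a ≤ k ∧ k < b then c else 0) = ((min b m - a : ℕ) : ℂ) * c := by
  have h : (Finset.range m).filter (fun k => a ≤ k ∧ k < b) = Finset.Ico a (min b m) := by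
    ext k; simp [Finset.mem_range, Finset.mem_Ico]; omega
  rw [Finset.sum_ite, Finset.sum_const, Finset.sum_const, h, Nat.card_Ico]
  simp [nsmul_eq_mul]

lemma sum_ind_Ico_ne (m a b iv : ℕ) (hb : b ≤ m) (h1 : a ≤ iv) (h2 : iv < b) (c : ℂ) :
    ∑ k ∈ Finset.range m, (if k ≠ iv ∧ a ≤ k ∧ k < b then c else 0)
      = ((b - a - 1 : ℕ) : ℂ) * c := by
  have h : (Finset.range m).filter (fun k => k ≠ iv ∧ a ≤ k ∧ k < b)
      = (Finset.Ico a b).erase iv := by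
    ext k; simp [Finset.mem_range, Finset.mem_Ico, Finset.mem_erase]; omega
  rw [Finset.sum_ite, Finset.sum_const, Finset.sum_const, h,
    Finset.card_erase_of_mem (by simp [Finset.mem_Ico]; omega), Nat.card_Ico]
  simp [nsmul_eq_mul]

lemma key1 (n : ℕ) (hn : 3 ≤ n) (iv : ℕ) (hi : iv < 2*n) :
    ∑ k ∈ Finset.range (2*n), aEnt n iv k * pEnt n k 1
      = ∑ k ∈ Finset.range (2*n), pEnt n iv k * bEnt n k 1 := by
  have hR : ∀ k ∈ Finset.range (2*n), pEnt n iv k * bEnt n k 1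
      = (if k = 0 then ((n:ℂ)-1) * pEnt n iv k else 0)
        + (if k = 1 then ((n:ℂ)-2) * pEnt n iv k else 0) := by
    intro k _
    simp only [bEnt]
    split_ifs <;> simp_all <;> ring
  rw [Finset.sum_congr rfl hR, Finset.sum_add_distrib,
    sum_ite_eq_nat (by omega), sum_ite_eq_nat (by omega)]
  by_cases h0 : iv = 0
  · subst h0
    have hL : ∀ k ∈ Finset.range (2*n), aEnt n 0 k * pEnt n k 1
        = if 1 ≤ k ∧ k < n then (1:ℂ) else 0 := by
      intro k _; simp only [aEnt, pEnt]; split_ifs <;> simp_all <;> omega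
    rw [Finset.sum_congr rfl hL, sum_ind_Ico]
    simp only [pEnt]
    norm_num
    rw [min_eq_left (by omega), Nat.cast_sub (by omega)]
    norm_num
  by_cases hcl : iv < n
  · have hL : ∀ k ∈ Finset.range (2*n), aEnt n iv k * pEnt n k 1
        = if k ≠ iv ∧ 1 ≤ k ∧ k < n then (1:ℂ) else 0 := by
      intro k _; simp only [aEnt, pEnt]; split_ifs <;> simp_all <;> omega
    rw [Finset.sum_congr rfl hL, sum_ind_Ico_ne (2*n) 1 n iv (by omega) (by omega) (by omega)]
    simp only [pEnt]
    rw [Nat.cast_sub (by omega), Nat.cast_sub (by omega)]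
    simp [h0, hcl, show (1:ℕ) ≤ iv by omega]
    try ring
  · have hL : ∀ k ∈ Finset.range (2*n), aEnt n iv k * pEnt n k 1 = 0 := by
      intro k _; simp only [aEnt, pEnt]; split_ifs <;> simp_all <;> omega
    rw [Finset.sum_eq_zero hL]
    simp [pEnt, h0, hcl]

lemma key2 (n : ℕ) (hn : 3 ≤ n) (iv : ℕ) (hi : iv < 2*n) :
    ∑ k ∈ Finset.range (2*n), aEnt n iv k * pEnt n k 2
      = ∑ k ∈ Finset.range (2*n), pEnt n iv k * bEnt n k 2 := by
  have hR : ∀ k ∈ Finset.range (2*n), pEnt n iv k * bEnt n k 2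
      = (if k = 0 then (n:ℂ) * pEnt n iv k else 0) := by
    intro k _
    simp only [bEnt]
    split_ifs <;> simp_all <;> ring
  rw [Finset.sum_congr rfl hR, sum_ite_eq_nat (by omega)]
  by_cases h0 : iv = 0
  · subst h0
    have hL : ∀ k ∈ Finset.range (2*n), aEnt n 0 k * pEnt n k 2
        = if n ≤ k ∧ k < 2*n then (1:ℂ) else 0 := by
      intro k hk; have hk' := Finset.mem_range.1 hk
      simp only [aEnt, pEnt]; split_ifs <;> simp_all <;> omega
    rw [Finset.sum_congr rfl hL, sum_ind_Ico]
    rw [min_self, Nat.cast_sub (by omega)]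
    simp [pEnt]
    ring
  · have hL : ∀ k ∈ Finset.range (2*n), aEnt n iv k * pEnt n k 2 = 0 := by
      intro k _; simp only [aEnt, pEnt]; split_ifs <;> simp_all <;> omega
    rw [Finset.sum_eq_zero hL]
    simp [pEnt, h0]

lemma key3 (n : ℕ) (hn : 3 ≤ n) (iv jv : ℕ) (hi : iv < 2*n) (h3 : 3 ≤ jv) (hjn : jv ≤ n) :
    ∑ k ∈ Finset.range (2*n), aEnt n iv k * pEnt n k jv
      = ∑ k ∈ Finset.range (2*n), pEnt n iv k * bEnt n k jv := by
  have hL : ∀ k ∈ Finset.range (2*n), aEnt n iv k * pEnt n k jv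
      = (if k = 1 then aEnt n iv k else 0) + (-1) * (if k = jv - 1 then aEnt n iv k else 0) := by
    intro k _
    simp only [pEnt]
    split_ifs <;> first | ring1 | (exfalso; omega) | (exfalso; assumption)
  have hR : ∀ k ∈ Finset.range (2*n), pEnt n iv k * bEnt n k jv
      = (-1) * (if k = jv then pEnt n iv k else 0) := by
    intro k _
    simp only [bEnt]
    split_ifs <;> first | ring1 | (exfalso; omega) | (exfalso; assumption)
  rw [Finset.sum_congr rfl hL, Finset.sum_congr rfl hR, Finset.sum_add_distrib,
    ← Finset.mul_sum, ← Finset.mul_sum,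
    sum_ite_eq_nat (by omega), sum_ite_eq_nat (by omega), sum_ite_eq_nat (by omega)]
  clear hL hR
  simp only [aEnt, pEnt]
  norm_num
  split_ifs <;> first | ring1 | (exfalso; omega) | (exfalso; assumption)

lemma key4 (n : ℕ) (hn : 3 ≤ n) (iv jv : ℕ) (hi : iv < 2*n) (h3 : n < jv) (hj : jv < 2*n) :
    ∑ k ∈ Finset.range (2*n), aEnt n iv k * pEnt n k jv
      = ∑ k ∈ Finset.range (2*n), pEnt n iv k * bEnt n k jv := by
  have hL : ∀ k ∈ Finset.range (2*n), aEnt n iv k * pEnt n k jv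
      = (if k = n then aEnt n iv k else 0) + (-1) * (if k = jv then aEnt n iv k else 0) := by
    intro k _
    simp only [pEnt]
    split_ifs <;> first | ring1 | (exfalso; omega) | (exfalso; assumption)
  have hR : ∀ k ∈ Finset.range (2*n), pEnt n iv k * bEnt n k jv = 0 := by
    intro k _
    simp only [bEnt]
    split_ifs <;> first | ring1 | (exfalso; omega) | (exfalso; assumption)
  rw [Finset.sum_congr rfl hL, Finset.sum_eq_zero hR, Finset.sum_add_distrib,
    ← Finset.mul_sum, sum_ite_eq_nat (by omega), sum_ite_eq_nat (by omega)]
  clear hL hR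
  simp only [aEnt]
  split_ifs <;> first | ring1 | (exfalso; omega) | (exfalso; assumption)

lemma keyAll (n : ℕ) (hn : 3 ≤ n) (iv jv : ℕ) (hi : iv < 2*n) (hj : jv < 2*n) :
    ∑ k ∈ Finset.range (2*n), aEnt n iv k * pEnt n k jv
      = ∑ k ∈ Finset.range (2*n), pEnt n iv k * bEnt n k jv := by
  match jv, hj with
  | 0, _ => exact key0 n hn iv hi
  | 1, _ => exact key1 n hn iv hi
  | 2, _ => exact key2 n hn iv hi
  | (m+3), hj =>
    rcases le_or_gt (m+3) n with h | h
    · exact key3 n hn iv (m+3) hi (by omega) h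
    · exact key4 n hn iv (m+3) hi h hj

def Pm (n : ℕ) : Matrix (Fin (2*n)) (Fin (2*n)) ℂ := Matrix.of fun i j => pEnt n i.val j.val
def Bm (n : ℕ) : Matrix (Fin (2*n)) (Fin (2*n)) ℂ := Matrix.of fun i j => bEnt n i.val j.val

lemma adj_eq (n : ℕ) (i k : Fin (2*n)) : adjJoinOddC n i k = aEnt n i.val k.val := by
  simp only [adjJoinOddC, aEnt, Matrix.of_apply, ne_eq, Fin.ext_iff]

lemma AP_eq_PB (n : ℕ) (hn : 3 ≤ n) : adjJoinOddC n * Pm n = Pm n * Bm n := by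
  ext i j
  rw [Matrix.mul_apply, Matrix.mul_apply]
  have L : ∑ k : Fin (2*n), adjJoinOddC n i k * Pm n k j
      = ∑ k ∈ Finset.range (2*n), aEnt n i.val k * pEnt n k j.val := by
    rw [← Fin.sum_univ_eq_sum_range (fun k => aEnt n i.val k * pEnt n k j.val) (2*n)]
    exact Finset.sum_congr rfl fun k _ => by rw [adj_eq]; rfl
  have R : ∑ k : Fin (2*n), Pm n i k * Bm n k j
      = ∑ k ∈ Finset.range (2*n), pEnt n i.val k * bEnt n k j.val := by
    rw [← Fin.sum_univ_eq_sum_range (fun k => pEnt n i.val k * bEnt n k j.val) (2*n)]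
    exact Finset.sum_congr rfl fun k _ => rfl
  rw [L, R]
  exact keyAll n hn i.val j.val i.isLt j.isLt

lemma detP_ne (n : ℕ) (hn : 3 ≤ n) : (Pm n).det ≠ 0 := by
  intro hdet
  obtain ⟨v, hv0, hv⟩ := (Matrix.exists_mulVec_eq_zero_iff).mpr hdet
  classical
  set w : ℕ → ℂ := fun k => if h : k < 2*n then v ⟨k, h⟩ else 0 with hwdef
  have hw : ∀ k : Fin (2*n), w k.val = v k := by
    intro k; simp only [hwdef]; rw [dif_pos k.isLt]
  have hrow : ∀ iv, iv < 2*n → ∑ k ∈ Finset.range (2*n), pEnt n iv k * w k = 0 := by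
    intro iv hiv
    have h1 : (Pm n).mulVec v ⟨iv, hiv⟩ = 0 := by rw [hv]; rfl
    simp only [Matrix.mulVec, dotProduct] at h1
    rw [← h1, ← Fin.sum_univ_eq_sum_range (fun k => pEnt n iv k * w k) (2*n)]
    exact Finset.sum_congr rfl fun k _ => by rw [hw]; rfl
  have h0 : w 0 = 0 := by
    have h := hrow 0 (by omega)
    have hp : ∀ k ∈ Finset.range (2*n), pEnt n 0 k * w k = if k = 0 then w k else 0 := by
      intro k _; simp only [pEnt]; split_ifs <;> first | ring1 | (exfalso; omega) | (exfalso; assumption)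
    rwa [Finset.sum_congr rfl hp, sum_ite_eq_nat (by omega)] at h
  have hclique : ∀ j, 3 ≤ j → j ≤ n → w j = w 1 := by
    intro j h3 hjn
    have h := hrow (j-1) (by omega)
    have hp : ∀ k ∈ Finset.range (2*n), pEnt n (j-1) k * w k
        = (if k = 1 then w k else 0) + (-1) * (if k = j then w k else 0) := by
      intro k _; simp only [pEnt]; split_ifs <;> first | ring1 | (exfalso; omega) | (exfalso; assumption)
    rw [Finset.sum_congr rfl hp, Finset.sum_add_distrib, ← Finset.mul_sum,
      sum_ite_eq_nat (by omega), sum_ite_eq_nat (by omega)] at h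
    linear_combination -h
  have h1 : w 1 = 0 := by
    have h := hrow 1 (by omega)
    have hp : ∀ k ∈ Finset.range (2*n), pEnt n 1 k * w k
        = (if k = 1 then w k else 0) + (if 3 ≤ k ∧ k < n+1 then w k else 0) := by
      intro k _; simp only [pEnt]; split_ifs <;> first | ring1 | (exfalso; omega) | (exfalso; assumption)
    have hc : ∀ k ∈ Finset.range (2*n), (if 3 ≤ k ∧ k < n+1 then w k else 0)
        = (if 3 ≤ k ∧ k < n+1 then w 1 else 0) := by
      intro k _
      by_cases hk : 3 ≤ k ∧ k < n+1
      · rw [if_pos hk, if_pos hk, hclique k hk.1 (by omega)]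
      · rw [if_neg hk, if_neg hk]
    rw [Finset.sum_congr rfl hp, Finset.sum_add_distrib, sum_ite_eq_nat (by omega),
      Finset.sum_congr rfl hc, sum_ind_Ico] at h
    rw [min_eq_left (by omega), show n + 1 - 3 = n - 2 by omega] at h
    have hne : ((n-1 : ℕ) : ℂ) ≠ 0 := Nat.cast_ne_zero.2 (by omega)
    have hcast : (1:ℂ) + ((n-2 : ℕ) : ℂ) = ((n-1 : ℕ) : ℂ) := by
      rw [Nat.cast_sub (by omega), Nat.cast_sub (by omega)]; ring
    have : ((n-1 : ℕ) : ℂ) * w 1 = 0 := by rw [← hcast]; linear_combination h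
    exact (mul_eq_zero.1 this).resolve_left hne
  have hiso : ∀ j, n < j → j < 2*n → w j = w 2 := by
    intro j hj1 hj2
    have h := hrow j hj2
    have hp : ∀ k ∈ Finset.range (2*n), pEnt n j k * w k
        = (if k = 2 then w k else 0) + (-1) * (if k = j then w k else 0) := by
      intro k _; simp only [pEnt]; split_ifs <;> first | ring1 | (exfalso; omega) | (exfalso; assumption)
    rw [Finset.sum_congr rfl hp, Finset.sum_add_distrib, ← Finset.mul_sum,
      sum_ite_eq_nat (by omega), sum_ite_eq_nat (by omega)] at h
    linear_combination -h
  have h2 : w 2 = 0 := by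
    have h := hrow n (by omega)
    have hp : ∀ k ∈ Finset.range (2*n), pEnt n n k * w k
        = (if k = 2 then w k else 0) + (if n+1 ≤ k ∧ k < 2*n then w k else 0) := by
      intro k hk; have := Finset.mem_range.1 hk
      simp only [pEnt]; split_ifs <;> first | ring1 | (exfalso; omega) | (exfalso; assumption)
    have hc : ∀ k ∈ Finset.range (2*n), (if n+1 ≤ k ∧ k < 2*n then w k else 0)
        = (if n+1 ≤ k ∧ k < 2*n then w 2 else 0) := by
      intro k _
      by_cases hk : n+1 ≤ k ∧ k < 2*n
      · rw [if_pos hk, if_pos hk, hiso k (by omega) hk.2]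
      · rw [if_neg hk, if_neg hk]
    rw [Finset.sum_congr rfl hp, Finset.sum_add_distrib, sum_ite_eq_nat (by omega),
      Finset.sum_congr rfl hc, sum_ind_Ico] at h
    rw [min_self, show 2*n - (n+1) = n - 1 by omega] at h
    have hne : ((n : ℕ) : ℂ) ≠ 0 := Nat.cast_ne_zero.2 (by omega)
    have hcast : (1:ℂ) + ((n-1 : ℕ) : ℂ) = ((n : ℕ) : ℂ) := by
      rw [Nat.cast_sub (by omega)]; ring
    have : ((n : ℕ) : ℂ) * w 2 = 0 := by rw [← hcast]; linear_combination h
    exact (mul_eq_zero.1 this).resolve_left hne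
  apply hv0
  funext k
  have hk := k.isLt
  have : w k.val = 0 := by
    rcases Nat.lt_or_ge k.val 3 with h | h
    · interval_cases hkv : k.val
      · exact h0
      · exact h1
      · exact h2
    · rcases le_or_gt k.val n with h' | h'
      · rw [hclique k.val h h']; exact h1
      · rw [hiso k.val h' hk]; exact h2
  rw [← hw k, this]; rfl

lemma charpoly_A_eq_B (n : ℕ) (hn : 3 ≤ n) :
    (adjJoinOddC n).charpoly = (Bm n).charpoly := by
  have h := AP_eq_PB n hn
  have key : charmatrix (adjJoinOddC n) * (Pm n).map Polynomial.C
      = (Pm n).map Polynomial.C * charmatrix (Bm n) := by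
    show (Matrix.scalar _ (X : ℂ[X]) - (Polynomial.C : ℂ →+* ℂ[X]).mapMatrix (adjJoinOddC n))
        * (Pm n).map Polynomial.C
      = (Pm n).map Polynomial.C
        * (Matrix.scalar _ (X : ℂ[X]) - (Polynomial.C : ℂ →+* ℂ[X]).mapMatrix (Bm n))
    rw [sub_mul, mul_sub]
    congr 1
    · exact (Matrix.scalar_commute (X : ℂ[X]) (fun r => Commute.all _ _) _).eq
    · rw [RingHom.mapMatrix_apply, RingHom.mapMatrix_apply, ← Matrix.map_mul, ← Matrix.map_mul, h]
  have hdet := congrArg Matrix.det key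
  rw [Matrix.det_mul, Matrix.det_mul] at hdet
  have hPdet : ((Pm n).map Polynomial.C).det = Polynomial.C ((Pm n).det) := by
    rw [show (Pm n).map Polynomial.C = (Polynomial.C : ℂ →+* ℂ[X]).mapMatrix (Pm n) from rfl,
      ← RingHom.map_det]
  rw [hPdet] at hdet
  have hCne : (Polynomial.C ((Pm n).det)) ≠ 0 := by
    simpa using detP_ne n hn
  apply mul_right_cancel₀ hCne
  calc (adjJoinOddC n).charpoly * Polynomial.C ((Pm n).det)
      = Polynomial.C ((Pm n).det) * (Bm n).charpoly := hdet
    _ = (Bm n).charpoly * Polynomial.C ((Pm n).det) := mul_comm _ _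

lemma charpoly_neg_one (m : ℕ) : (-1 : Matrix (Fin m) (Fin m) ℂ).charpoly = (X + 1)^m := by
  unfold Matrix.charpoly
  have h : charmatrix (-1 : Matrix (Fin m) (Fin m) ℂ)
      = Matrix.diagonal (fun _ => (X:ℂ[X]) + 1) := by
    ext i j
    by_cases hij : i = j
    · subst hij; simp
    · rw [charmatrix_apply_ne _ _ _ hij, Matrix.diagonal_apply_ne _ hij]
      simp [Matrix.one_apply_ne hij]
  rw [h, Matrix.det_diagonal]
  simp
lemma charpoly_zero' (m : ℕ) : (0 : Matrix (Fin m) (Fin m) ℂ).charpoly = X^m := by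
  unfold Matrix.charpoly
  have h : charmatrix (0 : Matrix (Fin m) (Fin m) ℂ)
      = Matrix.diagonal (fun _ => (X:ℂ[X])) := by
    ext i j
    by_cases hij : i = j
    · subst hij; simp
    · rw [charmatrix_apply_ne _ _ _ hij, Matrix.diagonal_apply_ne _ hij]
      simp
  rw [h, Matrix.det_diagonal]
  simp

def C3 (n : ℕ) : Matrix (Fin 3) (Fin 3) ℂ := !![0, (n:ℂ)-1, (n:ℂ); 1, (n:ℂ)-2, 0; 1, 0, 0]

lemma charpoly_C3 (n : ℕ) : (C3 n).charpoly
    = X^3 - Polynomial.C ((n:ℂ)-2) * X^2 - Polynomial.C (2*(n:ℂ)-1) * X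
      + Polynomial.C ((n:ℂ)*((n:ℂ)-2)) := by
  unfold Matrix.charpoly
  rw [Matrix.det_fin_three]
  simp only [charmatrix_apply, Matrix.diagonal_apply, C3, Matrix.cons_val', Matrix.cons_val_zero,
    Matrix.cons_val_one, Matrix.head_cons, Matrix.head_fin_const, Matrix.empty_val',
    Matrix.cons_val_fin_one, Matrix.cons_val_two, Matrix.tail_cons, Matrix.of_apply]
  norm_num [Fin.ext_iff, Matrix.vecHead, Matrix.vecTail, map_ofNat]
  ring

lemma charpoly_Bm (n : ℕ) (hn : 3 ≤ n) :
    (Bm n).charpoly = (C3 n).charpoly * ((X + 1)^(n-2) * X^(n-1)) := by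
  have hcard : 3 + ((n-2) + (n-1)) = 2*n := by omega
  let e : (Fin 3 ⊕ (Fin (n-2) ⊕ Fin (n-1))) ≃ Fin (2*n) :=
    ((Equiv.refl (Fin 3)).sumCongr finSumFinEquiv).trans (finSumFinEquiv.trans (finCongr hcard))
  have hv1 : ∀ k : Fin 3, (e (Sum.inl k)).val = k.val := by
    intro k; simp [e, finCongr_apply]
  have hv2 : ∀ k : Fin (n-2), (e (Sum.inr (Sum.inl k))).val = 3 + k.val := by
    intro k; simp [e, finCongr_apply]
  have hv3 : ∀ k : Fin (n-1), (e (Sum.inr (Sum.inr k))).val = 3 + ((n-2) + k.val) := by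
    intro k; simp [e, finCongr_apply]
  have hB : Bm n = (Matrix.reindex e e)
      (Matrix.fromBlocks (C3 n) 0 0
        (Matrix.fromBlocks (-1 : Matrix (Fin (n-2)) (Fin (n-2)) ℂ) 0 0
          (0 : Matrix (Fin (n-1)) (Fin (n-1)) ℂ))) := by
    ext i j
    obtain ⟨a, rfl⟩ := e.surjective i
    obtain ⟨b, rfl⟩ := e.surjective j
    rw [Matrix.reindex_apply, Matrix.submatrix_apply, Equiv.symm_apply_apply,
      Equiv.symm_apply_apply]
    have hBapp : ∀ x y : Fin (2*n), Bm n x y = bEnt n x.val y.val := fun _ _ => rfl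
    rcases a with k | k | k <;> rcases b with l | l | l <;>
      rw [hBapp] <;>
      simp only [hv1, hv2, hv3, Matrix.fromBlocks_apply₁₁, Matrix.fromBlocks_apply₁₂,
        Matrix.fromBlocks_apply₂₁, Matrix.fromBlocks_apply₂₂, Matrix.zero_apply]
    · -- C3 block
      have hk := k.isLt
      have hl := l.isLt
      fin_cases k <;> fin_cases l <;> norm_num [bEnt, C3] <;> omega
    · have hk := k.isLt; have hl := l.isLt
      simp only [bEnt]
      split_ifs <;> first | rfl | (exfalso; omega)
    · have hk := k.isLt; have hl := l.isLt
      simp only [bEnt]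
      split_ifs <;> first | rfl | (exfalso; omega)
    · have hk := k.isLt; have hl := l.isLt
      simp only [bEnt]
      split_ifs <;> first | rfl | (exfalso; omega)
    · have hk := k.isLt; have hl := l.isLt
      simp only [bEnt, Matrix.neg_apply, Matrix.one_apply]
      by_cases hkl : k = l
      · subst hkl
        rw [if_neg (by omega), if_neg (by omega), if_neg (by omega),
          if_pos (by omega), if_pos rfl, if_pos rfl]
      · rw [if_neg (by omega), if_neg (by omega), if_neg (by omega),
          if_pos (by omega), if_neg (by have := Fin.val_ne_of_ne hkl; omega), if_neg hkl]
        norm_num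
    · have hk := k.isLt; have hl := l.isLt
      simp only [bEnt]
      split_ifs <;> first | rfl | (exfalso; omega)
    · have hk := k.isLt; have hl := l.isLt
      simp only [bEnt]
      split_ifs <;> first | rfl | (exfalso; omega)
    · have hk := k.isLt; have hl := l.isLt
      simp only [bEnt]
      split_ifs <;> first | rfl | (exfalso; omega)
    · have hk := k.isLt; have hl := l.isLt
      simp only [bEnt]
      split_ifs <;> first | rfl | (exfalso; omega)
  rw [hB, Matrix.charpoly_reindex, Matrix.charpoly_fromBlocks_zero₂₁,
    Matrix.charpoly_fromBlocks_zero₂₁, charpoly_neg_one, charpoly_zero']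

end SpecAux

open SpecAux in
/-- For odd `n ≥ 3`, the spectrum of `K_1 ∨ (n·K_1 ⊔ K_{n-1})` consists of `0` with
multiplicity `n-1`, `-1` with multiplicity `n-2`, and the three roots of
`x³ - (n-2)x² - (2n-1)x + n(n-2) = 0`. -/
theorem spectrum_ESCom_dihedral_odd (n : ℕ) (hn : 3 ≤ n) (hodd : Odd n) :
    (adjJoinOddC n).charpoly.roots =
      Multiset.replicate (n - 1) 0 + Multiset.replicate (n - 2) (-1) +
        (X ^ 3 - C ((n : ℂ) - 2) * X ^ 2 - C (2 * (n : ℂ) - 1) * X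
          + C ((n : ℂ) * ((n : ℂ) - 2))).roots := by
  have hfac : (adjJoinOddC n).charpoly
      = (X ^ 3 - Polynomial.C ((n : ℂ) - 2) * X ^ 2 - Polynomial.C (2 * (n : ℂ) - 1) * X
          + Polynomial.C ((n : ℂ) * ((n : ℂ) - 2))) * ((X + 1)^(n-2) * X^(n-1)) := by
    rw [charpoly_A_eq_B n hn, charpoly_Bm n hn, charpoly_C3]
  have h1 : (X ^ 3 - Polynomial.C ((n : ℂ) - 2) * X ^ 2 - Polynomial.C (2 * (n : ℂ) - 1) * X
      + Polynomial.C ((n : ℂ) * ((n : ℂ) - 2))) * ((X + 1)^(n-2) * X^(n-1)) ≠ 0 := by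
    rw [← hfac]; exact (Matrix.charpoly_monic _).ne_zero
  have h2 : ((X + 1 : ℂ[X])^(n-2) * X^(n-1)) ≠ 0 := right_ne_zero_of_mul h1
  rw [hfac, Polynomial.roots_mul h1, Polynomial.roots_mul h2, Polynomial.roots_pow,
    Polynomial.roots_pow, Polynomial.roots_X,
    show (X + 1 : ℂ[X]) = X - Polynomial.C (-1) by rw [map_neg, Polynomial.C_1]; ring,
    Polynomial.roots_X_sub_C,
    Multiset.nsmul_singleton, Multiset.nsmul_singleton]
  ac_rfl
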